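/- For each fixed integer m ≥ 2, a(n,m) = (log n)^m / m! + γ (log n)^{m−1} / (m−1)! + O((log n)^{m−2}) as n → ∞; that is, there exist constants C > 0 and N such that for all n ≥ N, |a(n,m) − (log n)^m / m! − γ (log n)^{m−1}/(m−1)!| ≤ C (log n)^{m−2}. -/

import Mathlib

/-!
Pascal's rule and absorption give the recursion `a(n, m+1) = ∑_{k ≤ n} a(k, m) / k`, with
`a(n, 0) = 1` and hence `a(n, 1) = H_n`. Write `a(n, m) = (log n)^m / m! + γ (log n)^(m-1) / (m-1)!
+ R_m(n)`. Comparing `∑_{k ≤ n} (log k)^j / k` with `∫ (log x)^j / x = (log n)^(j+1) / (j+1)`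
(the integrand decreases for `x ≥ e^j`) shows that the main terms of `a(·, m)` sum to those of
`a(·, m+1)` up to `O(1)`, so `R_{m+1}(n) = ∑_{k ≤ n} R_m(k) / k + O(1)`. Since
`R_1(n) = H_n - log n - γ = O(1/n)`, the series `∑ R_1(k) / k` converges and `R_2 = O(1)`; from
then on `R_m = O((log n)^(m-2))` sums to `∑_{k ≤ n} R_m(k) / k = O((log n)^(m-1))`.
-/

open Finset Filter Asymptotics Real

theorem abs_harmonic_sub_log_sub_eulerMascheroniConstant_le {n : ℕ} (hn : n ≠ 0) :
    |(harmonic n : ℝ) - log n - eulerMascheroniConstant| ≤ 1 / n := by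
  have hlower := eulerMascheroniConstant_lt_eulerMascheroniSeq' n
  have hupper := eulerMascheroniSeq_lt_eulerMascheroniConstant n
  rw [eulerMascheroniSeq', if_neg hn] at hlower
  rw [eulerMascheroniSeq] at hupper
  have hn0 : (0 : ℝ) < n := by positivity
  have hlog : log (n + 1) - log n ≤ 1 / n := by
    rw [← log_div (by positivity) hn0.ne']
    calc log ((n + 1) / n) ≤ (n + 1) / n - 1 := log_le_sub_one_of_pos (by positivity)
      _ = 1 / n := by field_simp; ring
  rw [abs_le]
  constructor <;> linarith

theorem AntitoneOn.abs_sum_Ioc_sub_integral_le {f : ℝ → ℝ} {a b : ℕ} (hab : a ≤ b)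
    (hf : AntitoneOn f (Set.Icc a b)) :
    |∑ k ∈ Ioc a b, f k - ∫ x in a..b, f x| ≤ f a - f b := by
  have hIoc : ∑ k ∈ Ioc a b, f k = ∑ k ∈ Ico a b, f ↑(k + 1) := by
    rw [← Ico_add_one_add_one_eq_Ioc, sum_Ico_add' (fun k : ℕ => f k)]
  have hIco : ∑ k ∈ Ico a b, f k + f b = f a + ∑ k ∈ Ioc a b, f k := by
    rw [← sum_Ico_succ_top hab, Ico_add_one_right_eq_Icc, Icc_eq_cons_Ioc hab, sum_cons]
  have hle := hf.sum_le_integral_Ico hab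
  have hge := hf.integral_le_sum_Ico hab
  rw [abs_le]
  constructor <;> linarith

theorem hasDerivAt_log_pow_succ_div (j : ℕ) {x : ℝ} (hx : x ≠ 0) :
    HasDerivAt (fun x => log x ^ (j + 1) / (j + 1)) (log x ^ j / x) x := by
  have hpow : HasDerivAt (fun x => log x ^ (j + 1)) ((j + 1 : ℕ) * log x ^ j * x⁻¹) x :=
    (hasDerivAt_log hx).pow (j + 1)
  exact (hpow.div_const (j + 1 : ℝ)).congr_deriv (by push_cast; field_simp)

theorem antitoneOn_log_pow_div (j : ℕ) :
    AntitoneOn (fun x => log x ^ j / x) (Set.Ici (exp j)) := by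
  intro x hx y hy hxy
  have hx0 : 0 < x := (exp_pos _).trans_le hx
  rcases j.eq_zero_or_pos with rfl | hj
  · simp only [pow_zero]
    gcongr
  have hroot {z : ℝ} (hz : z ∈ Set.Ici (exp j)) :
      log z ^ j / z = (log z / z ^ (j : ℝ)⁻¹) ^ j := by
    rw [div_pow, rpow_inv_natCast_pow ((exp_pos _).trans_le hz).le hj.ne']
  have hanti := log_div_self_rpow_antitoneOn (a := (j : ℝ)⁻¹) (by positivity)
  rw [inv_inv] at hanti
  simp only [hroot hx, hroot hy]
  have hy0 : 0 < y := hx0.trans_le hxy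
  have hlog : 0 ≤ log y := log_nonneg (by linarith [add_one_le_exp (j : ℝ), Set.mem_Ici.1 hy])
  exact pow_le_pow_left₀ (by positivity) (hanti hx hy hxy) j

theorem isBigO_sum_log_pow_div_sub (j : ℕ) :
    (fun n : ℕ => ∑ k ∈ Icc 1 n, log k ^ j / k - log n ^ (j + 1) / (j + 1))
      =O[atTop] fun _ => (1 : ℝ) := by
  set f : ℝ → ℝ := fun x => log x ^ j / x
  set F : ℝ → ℝ := fun x => log x ^ (j + 1) / (j + 1)
  set K := ⌈exp j⌉₊
  have hK : exp j ≤ K := Nat.le_ceil _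
  refine IsBigO.of_bound (|∑ k ∈ Icc 1 K, f k - F K| + f K)
    (eventually_atTop.2 ⟨K, fun n hn => ?_⟩)
  have hKn : (K : ℝ) ≤ n := by exact_mod_cast hn
  have hanti : AntitoneOn f (Set.Icc K n) :=
    (antitoneOn_log_pow_div j).mono fun x hx => hK.trans hx.1
  have hsplit : ∑ k ∈ Icc 1 n, f k = ∑ k ∈ Icc 1 K, f k + ∑ k ∈ Ioc K n, f k := by
    have hIoc (m : ℕ) : Icc 1 m = Ioc 0 m := Icc_add_one_left_eq_Ioc 0 m
    rw [hIoc, hIoc, sum_Ioc_consecutive _ K.zero_le hn]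
  have hFTC : ∫ x in (K : ℝ)..n, f x = F n - F K := by
    refine intervalIntegral.integral_eq_sub_of_hasDerivAt (fun x hx => ?_)
      (hanti.mono (Set.uIcc_of_le hKn).subset).intervalIntegrable
    rw [Set.uIcc_of_le hKn] at hx
    exact hasDerivAt_log_pow_succ_div j (by linarith [hx.1, exp_pos (j : ℝ)])
  have herr := hanti.abs_sum_Ioc_sub_integral_le hn
  rw [hFTC] at herr
  have hfn : 0 ≤ f n := by positivity
  rw [norm_one, mul_one, Real.norm_eq_abs]
  calc |∑ k ∈ Icc 1 n, f k - F n|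
      = |(∑ k ∈ Icc 1 K, f k - F K) + (∑ k ∈ Ioc K n, f k - (F n - F K))| := by
        rw [hsplit]; congr 1; ring
    _ ≤ _ := (abs_add_le _ _).trans (by linarith)

theorem isBigO_one_log_pow (j : ℕ) : (fun _ => (1 : ℝ)) =O[atTop] fun n : ℕ => log n ^ j := by
  have hlog : Tendsto (fun n : ℕ => log n) atTop atTop :=
    tendsto_log_atTop.comp tendsto_natCast_atTop_atTop
  refine IsBigO.of_bound' ((hlog.eventually_ge_atTop 1).mono fun n hn => ?_)
  rw [norm_one, norm_pow, Real.norm_eq_abs, abs_of_nonneg (by linarith)]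
  exact one_le_pow₀ hn

theorem isBigO_sum_log_pow_div (j : ℕ) :
    (fun n : ℕ => ∑ k ∈ Icc 1 n, log k ^ j / k) =O[atTop] fun n => log n ^ (j + 1) := by
  have hmain : (fun n : ℕ => log n ^ (j + 1) / (j + 1)) =O[atTop] fun n => log n ^ (j + 1) := by
    simpa only [div_eq_inv_mul] using
      (isBigO_refl (fun n : ℕ => log n ^ (j + 1)) atTop).const_mul_left ((j : ℝ) + 1)⁻¹
  simpa using ((isBigO_sum_log_pow_div_sub j).trans (isBigO_one_log_pow (j + 1))).add hmain

theorem Asymptotics.IsBigO.sum_div_log_pow {f : ℕ → ℝ} {j : ℕ}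
    (hf : f =O[atTop] fun k => log k ^ j) :
    (fun n => ∑ k ∈ Icc 1 n, f k / k) =O[atTop] fun n => log n ^ (j + 1) := by
  obtain ⟨C, hC, hfC⟩ := hf.exists_pos
  obtain ⟨N, hN⟩ := eventually_atTop.1 hfC.bound
  set A := ∑ k ∈ range N, |f k| / k
  have hterm (k : ℕ) : |f k / k| ≤ (if k < N then |f k| / k else 0) + C * (log k ^ j / k) := by
    have hlog : 0 ≤ log k ^ j / k := by positivity [log_natCast_nonneg k]
    rw [abs_div, Nat.abs_cast]
    split_ifs with hkN
    · linarith [mul_nonneg hC.le hlog]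
    · have hfk := hN k (not_lt.1 hkN)
      rw [Real.norm_eq_abs, norm_pow, Real.norm_eq_abs, abs_of_nonneg (log_natCast_nonneg k)] at hfk
      rw [zero_add, ← mul_div_assoc]
      gcongr
  have hbound (n : ℕ) :
      ‖∑ k ∈ Icc 1 n, f k / k‖ ≤ ‖A * 1 + C * ∑ k ∈ Icc 1 n, log k ^ j / k‖ := by
    have hsmall : ∑ k ∈ Icc 1 n, (if k < N then |f k| / k else 0) ≤ A := by
      rw [← sum_filter]
      exact sum_le_sum_of_subset_of_nonneg (fun k hk => by simp at hk ⊢; omega)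
        fun k _ _ => by positivity
    rw [Real.norm_eq_abs, Real.norm_eq_abs, mul_one]
    refine le_trans ?_ (le_abs_self _)
    calc |∑ k ∈ Icc 1 n, f k / k| ≤ ∑ k ∈ Icc 1 n, |f k / k| := abs_sum_le_sum_abs _ _
      _ ≤ ∑ k ∈ Icc 1 n, ((if k < N then |f k| / k else 0) + C * (log k ^ j / k)) :=
        sum_le_sum fun k _ => hterm k
      _ ≤ A + C * ∑ k ∈ Icc 1 n, log k ^ j / k := by
        rw [sum_add_distrib, mul_sum]; linarith
  exact (isBigO_of_le _ hbound).trans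
    (((isBigO_one_log_pow (j + 1)).const_mul_left A).add
      ((isBigO_sum_log_pow_div j).const_mul_left C))


noncomputable def alternatingBinomialSum (n m : ℕ) : ℝ :=
  ∑ k ∈ Icc 1 n, (n.choose k : ℝ) * (-1 : ℝ) ^ (k + 1) / (k : ℝ) ^ m

namespace alternatingBinomialSum

theorem eq_sum_range (n m : ℕ) : alternatingBinomialSum n m =
    ∑ j ∈ range n, (n.choose (j + 1) : ℝ) * (-1) ^ j / (j + 1 : ℝ) ^ m := by
  rw [alternatingBinomialSum, ← Ico_add_one_right_eq_Icc, sum_Ico_eq_sum_range]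
  refine sum_congr (by simp) fun j _ => ?_
  simp [add_comm 1 j, pow_succ]

theorem succ_succ (n m : ℕ) :
    alternatingBinomialSum (n + 1) (m + 1) =
      alternatingBinomialSum n (m + 1) + alternatingBinomialSum (n + 1) m / (n + 1) := by
  have hterm (j : ℕ) : ((n + 1).choose (j + 1) : ℝ) * (-1) ^ j / (j + 1 : ℝ) ^ (m + 1) =
      (n.choose (j + 1) : ℝ) * (-1) ^ j / (j + 1 : ℝ) ^ (m + 1) +
        ((n + 1).choose (j + 1) : ℝ) * (-1) ^ j / (j + 1 : ℝ) ^ m / (n + 1) := by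
    have hpascal : ((n + 1).choose (j + 1) : ℝ) = n.choose j + n.choose (j + 1) := by
      exact_mod_cast Nat.choose_succ_succ n j
    have habsorb : ((n + 1) : ℝ) * n.choose j = (n + 1).choose (j + 1) * (j + 1) := by
      exact_mod_cast Nat.add_one_mul_choose_eq n j
    generalize (-1 : ℝ) ^ j = s
    field_simp
    linear_combination s * (j + 1 : ℝ) ^ m * ((n + 1 : ℝ) * hpascal + habsorb)
  have hn : alternatingBinomialSum n (m + 1) =
      ∑ j ∈ range (n + 1), (n.choose (j + 1) : ℝ) * (-1) ^ j / (j + 1 : ℝ) ^ (m + 1) := by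
    simp [eq_sum_range, sum_range_succ]
  rw [eq_sum_range, eq_sum_range (n + 1) m, hn, sum_div, ← sum_add_distrib]
  exact sum_congr rfl fun j _ => hterm j

theorem succ_right (n m : ℕ) :
    alternatingBinomialSum n (m + 1) = ∑ k ∈ Icc 1 n, alternatingBinomialSum k m / k := by
  induction n with
  | zero => simp [alternatingBinomialSum]
  | succ n ih =>
    rw [sum_Icc_succ_top (by omega), ← ih, succ_succ]
    push_cast; ring

theorem zero_right {n : ℕ} (hn : n ≠ 0) : alternatingBinomialSum n 0 = 1 := by
  have h := Int.alternating_sum_range_choose_of_ne hn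
  rw [sum_range_succ'] at h
  rw [eq_sum_range]
  have : ∑ j ∈ range n, (-1 : ℤ) ^ j * n.choose (j + 1) = 1 := by
    simp [pow_succ] at h
    linarith
  simpa [mul_comm] using congrArg (Int.cast : ℤ → ℝ) this

theorem one_right (n : ℕ) : alternatingBinomialSum n 1 = harmonic n := by
  rw [succ_right, harmonic_eq_sum_Icc]
  push_cast
  exact sum_congr rfl fun k hk => by
    rw [zero_right (by simp at hk; omega), one_div]

noncomputable def remainder (m n : ℕ) : ℝ :=
  alternatingBinomialSum n m - log n ^ m / m.factorial -
    eulerMascheroniConstant * log n ^ (m - 1) / (m - 1).factorial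

theorem remainder_one (n : ℕ) :
    remainder 1 n = harmonic n - log n - eulerMascheroniConstant := by
  simp [remainder, one_right]

theorem isBigO_sum_remainder_one_div :
    (fun n => ∑ k ∈ Icc 1 n, remainder 1 k / k) =O[atTop] fun _ => (1 : ℝ) := by
  have hsummable : Summable fun k : ℕ => 1 / (k : ℝ) ^ 2 :=
    summable_one_div_nat_pow.2 one_lt_two
  refine IsBigO.of_bound (∑' k : ℕ, 1 / (k : ℝ) ^ 2) (Eventually.of_forall fun n => ?_)
  rw [norm_one, mul_one, Real.norm_eq_abs]
  calc |∑ k ∈ Icc 1 n, remainder 1 k / k| ≤ ∑ k ∈ Icc 1 n, |remainder 1 k / k| :=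
        abs_sum_le_sum_abs _ _
    _ ≤ ∑ k ∈ Icc 1 n, 1 / (k : ℝ) ^ 2 := sum_le_sum fun k hk => by
        have hk : k ≠ 0 := by simp at hk; omega
        rw [abs_div, Nat.abs_cast, remainder_one, sq, ← div_div]
        gcongr
        exact abs_harmonic_sub_log_sub_eulerMascheroniConstant_le hk
    _ ≤ ∑' k : ℕ, 1 / (k : ℝ) ^ 2 := hsummable.sum_le_tsum _ fun k _ => by positivity

theorem isBigO_remainder_sub_sum_remainder_div (m : ℕ) :
    (fun n => remainder (m + 2) n - ∑ k ∈ Icc 1 n, remainder (m + 1) k / k)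
      =O[atTop] fun _ => (1 : ℝ) := by
  have hsplit : (fun n => remainder (m + 2) n - ∑ k ∈ Icc 1 n, remainder (m + 1) k / k) =
      fun n : ℕ =>
        ((m + 1).factorial : ℝ)⁻¹ *
            (∑ k ∈ Icc 1 n, log k ^ (m + 1) / k - log n ^ (m + 1 + 1) / ((m + 1 : ℕ) + 1)) +
          eulerMascheroniConstant / m.factorial *
            (∑ k ∈ Icc 1 n, log k ^ m / k - log n ^ (m + 1) / (m + 1)) := by
    funext n
    have hfact₁ : ((m + 2).factorial : ℝ) = (m + 2) * (m + 1).factorial := by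
      push_cast [Nat.factorial_succ]; ring
    have hfact₀ : ((m + 1).factorial : ℝ) = (m + 1) * m.factorial := by
      push_cast [Nat.factorial_succ]; ring
    have hsum : ∑ k ∈ Icc 1 n, remainder (m + 1) k / k =
        alternatingBinomialSum n (m + 2) -
          (∑ k ∈ Icc 1 n, log k ^ (m + 1) / k) / (m + 1).factorial -
          eulerMascheroniConstant / m.factorial * ∑ k ∈ Icc 1 n, log k ^ m / k := by
      rw [succ_right, sum_div, mul_sum, ← sum_sub_distrib, ← sum_sub_distrib]
      refine sum_congr rfl fun k _ => ?_
      simp only [remainder, Nat.add_sub_cancel]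
      ring
    rw [hsum, remainder, show m + 2 - 1 = m + 1 from rfl, hfact₁, hfact₀]
    generalize ∑ k ∈ Icc 1 n, log k ^ (m + 1) / k = S₁
    generalize ∑ k ∈ Icc 1 n, log k ^ m / k = S₀
    push_cast
    field_simp
    ring
  rw [hsplit]
  exact ((isBigO_sum_log_pow_div_sub (m + 1)).const_mul_left _).add
    ((isBigO_sum_log_pow_div_sub m).const_mul_left _)

theorem isBigO_remainder (j : ℕ) : remainder (j + 2) =O[atTop] fun n => log n ^ j := by
  induction j with
  | zero =>
    simpa using (isBigO_remainder_sub_sum_remainder_div 0).add isBigO_sum_remainder_one_div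
  | succ j ih =>
    simpa using ((isBigO_remainder_sub_sum_remainder_div (j + 1)).trans
      (isBigO_one_log_pow (j + 1))).add ih.sum_div_log_pow

end alternatingBinomialSum

/-- For each fixed `m ≥ 2`,
`a(n,m) = (log n)^m / m! + γ (log n)^{m−1}/(m−1)! + O((log n)^{m−2})` as `n → ∞`,
where `a(n,m) = ∑_{k=1}^{n} C(n,k) (−1)^{k+1} / k^m` and `γ` is the Euler–Mascheroni
constant. -/
theorem alternating_binomial_sum_asymptotic_second_order
    (m : ℕ) (hm : 2 ≤ m) :
    ∃ C : ℝ, 0 < C ∧ ∃ N : ℕ, ∀ n : ℕ, N ≤ n →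
      |(∑ k ∈ Finset.Icc 1 n, (n.choose k : ℝ) * (-1 : ℝ) ^ (k + 1) / (k : ℝ) ^ m)
          - (Real.log n) ^ m / (m.factorial : ℝ)
          - Real.eulerMascheroniConstant * (Real.log n) ^ (m - 1) / ((m - 1).factorial : ℝ)|
        ≤ C * (Real.log n) ^ (m - 2) := by
  obtain ⟨j, rfl⟩ := Nat.exists_eq_add_of_le' hm
  obtain ⟨C, hC, hbound⟩ := (alternatingBinomialSum.isBigO_remainder j).exists_pos
  obtain ⟨N, hN⟩ := eventually_atTop.1 hbound.bound
  refine ⟨C, hC, N, fun n hn => ?_⟩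
  have h := hN n hn
  rw [Real.norm_eq_abs, norm_pow, Real.norm_eq_abs, abs_of_nonneg (log_natCast_nonneg n)] at h
  exact h
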